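/- For every third-order tensor A : Fin n₁ → Fin n₂ → Fin n₃ → ℂ, the mode-3 multi-tubal rank (the tubal rank) is bounded by the ranks of the mode-1 and mode-2 matricizations: r₃(A) ≤ min( rank(A_(1)), rank(A_(2)) ). -/
import Mathlib


/-- The `l`-th mode-3 DFT slice of a third-order tensor. -/
noncomputable def mode3DftSlice {n₁ n₂ : ℕ} (n₃ : ℕ) (A : Fin n₁ → Fin n₂ → Fin n₃ → ℂ)
    (l : Fin n₃) : Matrix (Fin n₁) (Fin n₂) ℂ :=
  Matrix.of fun i j =>
    ∑ k : Fin n₃, Complex.exp (-2 * Real.pi * Complex.I * (l : ℕ) * (k : ℕ) / (n₃ : ℕ)) * A i j k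

/-- The mode-3 tubal rank `r₃(A)` (the usual tubal rank). -/
noncomputable def mode3TubalRank {n₁ n₂ : ℕ} (n₃ : ℕ) (A : Fin n₁ → Fin n₂ → Fin n₃ → ℂ) : ℕ :=
  Finset.univ.sup fun l : Fin n₃ => (mode3DftSlice n₃ A l).rank

/-- The mode-1 matricization `A_(1)`. -/
def mat1 {n₁ n₂ n₃ : ℕ} (A : Fin n₁ → Fin n₂ → Fin n₃ → ℂ) :
    Matrix (Fin n₁) (Fin n₂ × Fin n₃) ℂ :=
  Matrix.of fun i jk => A i jk.1 jk.2

/-- The mode-2 matricization `A_(2)`. -/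
def mat2 {n₁ n₂ n₃ : ℕ} (A : Fin n₁ → Fin n₂ → Fin n₃ → ℂ) :
    Matrix (Fin n₂) (Fin n₁ × Fin n₃) ℂ :=
  Matrix.of fun j ik => A ik.1 j ik.2

/-- The tubal rank is bounded by the ranks of the mode-1 and mode-2
matricizations: `r₃(A) ≤ min (rank A_(1)) (rank A_(2))`. -/
theorem mode3TubalRank_le (n₁ n₂ n₃ : ℕ) (A : Fin n₁ → Fin n₂ → Fin n₃ → ℂ) :
    mode3TubalRank n₃ A ≤ min (mat1 A).rank (mat2 A).rank := by
  apply Finset.sup_le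
  intro l _
  set c : Fin n₃ → ℂ := fun k =>
    Complex.exp (-2 * Real.pi * Complex.I * (l : ℕ) * (k : ℕ) / (n₃ : ℕ)) with hc
  refine le_min ?_ ?_
  · -- slice = mat1 A * B
    have : mode3DftSlice n₃ A l =
        mat1 A * Matrix.of (fun jk : Fin n₂ × Fin n₃ => fun j : Fin n₂ =>
          if jk.1 = j then c jk.2 else 0) := by
      ext i j
      simp only [Matrix.mul_apply, mode3DftSlice, mat1, Matrix.of_apply,
        Fintype.sum_prod_type, mul_ite, mul_zero]
      rw [Finset.sum_comm]
      simp only [hc, Finset.sum_ite_eq', Finset.mem_univ, if_true]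
      exact Finset.sum_congr rfl fun k _ => by ring
    rw [this]
    exact Matrix.rank_mul_le_left _ _
  · -- sliceᵀ = mat2 A * B'
    have : (mode3DftSlice n₃ A l).transpose =
        mat2 A * Matrix.of (fun ik : Fin n₁ × Fin n₃ => fun i : Fin n₁ =>
          if ik.1 = i then c ik.2 else 0) := by
      ext j i
      simp only [Matrix.mul_apply, mode3DftSlice, mat2, Matrix.of_apply,
        Matrix.transpose_apply, Fintype.sum_prod_type, mul_ite, mul_zero]
      rw [Finset.sum_comm]
      simp only [hc, Finset.sum_ite_eq', Finset.mem_univ, if_true]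
      exact Finset.sum_congr rfl fun k _ => by ring
    calc (mode3DftSlice n₃ A l).rank = (mode3DftSlice n₃ A l).transpose.rank :=
          (Matrix.rank_transpose _).symm
      _ ≤ _ := by rw [this]; exact Matrix.rank_mul_le_left _ _
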